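/- For the dendriform operations on sets of planar binary trees, the relation (r ⊢ s) ⊣ t = r ⊢ (s ⊣ t) holds for all nonempty finite sets of nontrivial trees r, s, t. -/

import Mathlib

/-- Planar binary rooted trees: either the trivial tree `leaf` (drawn `|`)
or the grafting `node l r = l ∨ r` of two trees. -/
inductive PBT : Type
  | leaf : PBT
  | node : PBT → PBT → PBT
deriving DecidableEq

namespace PBT

/-- Number of internal vertices of a tree. -/
def size : PBT → ℕ
  | leaf => 0
  | node l r => l.size + r.size + 1

/-- The dendriform sum of two trees, a set of trees:
`s + t = (s ⊣ t) ∪ (s ⊢ t)` with `s ⊣ t = sˡ ∨ (sʳ + t)`, `s ⊢ t = (s + tˡ) ∨ tʳ`,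
and the trivial tree acting as neutral element. -/
def addT : PBT → PBT → Set PBT
  | leaf, t => {t}
  | node l r, leaf => {node l r}
  | node l r, node l' r' =>
      (fun x => node l x) '' addT r (node l' r') ∪
      (fun x => node x r') '' addT (node l r) l'
termination_by s t => s.size + t.size
decreasing_by all_goals (simp [size] <;> omega)

/-- The left operation `s ⊣ t := sˡ ∨ (sʳ + t)` on trees (with `s ⊣ | = s`),
valued in sets of trees. -/
def leftT : PBT → PBT → Set PBT
  | leaf, _ => ∅
  | node l r, leaf => {node l r}
  | node l r, node l' r' => (fun x => node l x) '' addT r (node l' r')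

/-- The right operation `s ⊢ t := (s + tˡ) ∨ tʳ` on trees (with `| ⊢ t = t`),
valued in sets of trees. -/
def rightT : PBT → PBT → Set PBT
  | _, leaf => ∅
  | leaf, t => {t}
  | node l r, node l' r' => (fun x => node x r') '' addT (node l r) l'

/-- Elementwise extension of `⊣` to sets of trees. -/
def leftS (S T : Set PBT) : Set PBT := ⋃ s ∈ S, ⋃ t ∈ T, leftT s t

/-- Elementwise extension of `⊢` to sets of trees. -/
def rightS (S T : Set PBT) : Set PBT := ⋃ s ∈ S, ⋃ t ∈ T, rightT s t

/-- Elementwise extension of the sum `+` to sets of trees: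
`S + T = (S ⊣ T) ∪ (S ⊢ T)`. -/
def addS (S T : Set PBT) : Set PBT := ⋃ s ∈ S, ⋃ t ∈ T, addT s t

/-- A nonempty finite set of nontrivial trees. -/
def Good (S : Set PBT) : Prop := S.Nonempty ∧ S.Finite ∧ ∀ t ∈ S, t ≠ leaf

end PBT


open PBT in
lemma key_lrl (r s t : PBT) (hs : s ≠ PBT.leaf) (ht : t ≠ PBT.leaf) :
    (⋃ x ∈ rightT r s, leftT x t) = ⋃ y ∈ leftT s t, rightT r y := by
  rcases s with - | ⟨c, d⟩; · exact absurd rfl hs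
  rcases t with - | ⟨e, f⟩; · exact absurd rfl ht
  cases r with
  | leaf =>
    ext x
    simp only [rightT, leftT, Set.mem_iUnion, Set.mem_singleton_iff,
      Set.mem_image]
    constructor
    · rintro ⟨i, rfl, hx⟩
      simp only [leftT, Set.mem_image] at hx
      obtain ⟨w, hw, rfl⟩ := hx
      exact ⟨node c w, ⟨w, hw, rfl⟩, rfl⟩
    · rintro ⟨y, hy, hx⟩
      obtain ⟨w, hw, rfl⟩ := hy
      simp only [rightT, Set.mem_singleton_iff] at hx
      subst hx
      exact ⟨node c d, rfl, ⟨w, hw, rfl⟩⟩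
  | node a b =>
    ext x
    simp only [rightT, leftT, Set.mem_iUnion, Set.mem_image]
    constructor
    · rintro ⟨i, ⟨u, hu, rfl⟩, hx⟩
      simp only [leftT, Set.mem_image] at hx
      obtain ⟨w, hw, rfl⟩ := hx
      exact ⟨node c w, ⟨w, hw, rfl⟩, u, hu, rfl⟩
    · rintro ⟨y, ⟨w, hw, rfl⟩, hx⟩
      simp only [rightT, Set.mem_image] at hx
      obtain ⟨u, hu, rfl⟩ := hx
      exact ⟨node u d, ⟨u, hu, rfl⟩, w, hw, rfl⟩

open PBT in
/-- For the dendriform operations on (nonempty finite) sets of nontrivial planar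
binary trees, `(r ⊢ s) ⊣ t = r ⊢ (s ⊣ t)`. -/
theorem left_right_eq_right_left (r s t : Set PBT)
    (hr : PBT.Good r) (hs : PBT.Good s) (ht : PBT.Good t) :
    leftS (rightS r s) t = rightS r (leftS s t) := by
  obtain ⟨-, -, hsn⟩ := hs
  obtain ⟨-, -, htn⟩ := ht
  ext x
  simp only [leftS, rightS, Set.mem_iUnion]
  constructor
  · rintro ⟨u, ⟨r', hr', s', hs', hu⟩, t', ht', hx⟩
    have key := key_lrl r' s' t' (hsn s' hs') (htn t' ht')
    have hx' : x ∈ ⋃ y ∈ leftT s' t', rightT r' y := by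
      rw [← key]; exact Set.mem_biUnion hu hx
    rw [Set.mem_iUnion₂] at hx'
    obtain ⟨y, hy, hxy⟩ := hx'
    exact ⟨r', hr', y, ⟨s', hs', t', ht', hy⟩, hxy⟩
  · rintro ⟨r', hr', y, ⟨s', hs', t', ht', hy⟩, hx⟩
    have key := key_lrl r' s' t' (hsn s' hs') (htn t' ht')
    have hx' : x ∈ ⋃ u ∈ rightT r' s', leftT u t' := by
      rw [key]; exact Set.mem_biUnion hy hx
    rw [Set.mem_iUnion₂] at hx'
    obtain ⟨u, hu, hxu⟩ := hx'
    exact ⟨u, ⟨r', hr', s', hs', hu⟩, t', ht', hxu⟩
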